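/- Let V, W be vector spaces, let ρ : V → W be linear and P, Q : V → V be linear, and for given Φ₀ ∈ W suppose solutions of problem (A) [Q PΦ = 0, ρ(Φ) = Φ₀, ρ(PΦ) = 0] exist and are unique. Suppose moreover that every Φ with PΦ = 0 satisfies Q PΦ = 0 and ρ(PΦ) = 0 trivially, and that the homogeneous problem [P QΨ = 0, ρ(Ψ) = 0, ρ(QΨ) = 0] has only the zero solution. Then for every Φ₀ ∈ W there is a unique Φ ∈ V with PΦ = 0 and ρ(Φ) = Φ₀. -/
import Mathlib

/-- Well-posedness transfer: existence and uniqueness for the modified second-order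
problem `(~QP)` together with uniqueness for the homogeneous problem `(~PQ)` yields
existence and uniqueness for the first-order Cauchy problem for `P`. -/
theorem stmt14 {k : Type*} [Field k] {V W : Type*}
    [AddCommGroup V] [Module k V] [AddCommGroup W] [Module k W]
    (P Q : V →ₗ[k] V) (ρ : V →ₗ[k] W)
    (hA : ∀ Φ₀ : W, ∃! Φ : V, Q (P Φ) = 0 ∧ ρ Φ = Φ₀ ∧ ρ (P Φ) = 0)
    (hHom : ∀ Ψ : V, P (Q Ψ) = 0 → ρ Ψ = 0 → ρ (Q Ψ) = 0 → Ψ = 0) :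
    ∀ Φ₀ : W, ∃! Φ : V, P Φ = 0 ∧ ρ Φ = Φ₀ := by
  intro Φ₀
  obtain ⟨Φ, ⟨hQP, hρ, hρP⟩, huniq⟩ := hA Φ₀
  have hP : P Φ = 0 := by
    apply hHom (P Φ) (by rw [hQP]; simp) hρP (by rw [hQP]; simp)
  refine ⟨Φ, ⟨hP, hρ⟩, ?_⟩
  intro Φ' ⟨hP', hρ'⟩
  exact huniq Φ' ⟨by rw [hP']; simp, hρ', by rw [hP']; simp⟩
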